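/- arXiv:2109.11765 — 2 statements merged into one kernel-verified Lean document; each statement's English description precedes it below -/
import Mathlib

section
/- Var[G̃_ij] = ( K_ii·K_jj·Σ_{s=1}^D p_{is}·p_{js} + K_ij²·Σ_{s=1}^D (2·p_{is}·p_{js} − p_{is}²·p_{js}²) ) / ( Σ_{s=1}^D p_{is}·p_{js} )². (Proposition 2, exact variance formula for the bias-corrected off-diagonal Gram entry.) -/
open MeasureTheory ProbabilityTheory Filter Finset

/-- The centered bivariate Gaussian law with covariance matrix `[[a, c], [c, b]]`,
characterized through the Cramér–Wold device. -/
def IsCenteredGaussianPair (ν : Measure (ℝ × ℝ)) (a b c : ℝ) : Prop :=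
  IsProbabilityMeasure ν ∧
    ∀ t u : ℝ, ν.map (fun p => t * p.1 + u * p.2) =
      gaussianReal 0 (Real.toNNReal (t ^ 2 * a + 2 * t * u * c + u ^ 2 * b))

/-- Codomain family for the joint family of the two indicator families (real-valued)
and the family of Gaussian pairs. -/
abbrev mixedCod (α β γ : Type*) : α ⊕ β ⊕ γ → Type _ :=
  Sum.elim (fun _ => ℝ) (Sum.elim (fun _ => ℝ) fun _ => ℝ × ℝ)

/-- The measurable-space structures on the codomains. -/
def mixedMS {α β γ : Type*} : ∀ x : α ⊕ β ⊕ γ, MeasurableSpace (mixedCod α β γ x)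
  | Sum.inl _ => (inferInstance : MeasurableSpace ℝ)
  | Sum.inr (Sum.inl _) => (inferInstance : MeasurableSpace ℝ)
  | Sum.inr (Sum.inr _) => (inferInstance : MeasurableSpace (ℝ × ℝ))

/-- The joint family made of the two indicator families and the Gaussian-pair family. -/
def mixedFam {Ω : Type*} {α β γ : Type*} (f : α → Ω → ℝ) (g : β → Ω → ℝ)
    (h : γ → Ω → ℝ × ℝ) : ∀ x : α ⊕ β ⊕ γ, Ω → mixedCod α β γ x
  | Sum.inl s => f s
  | Sum.inr (Sum.inl s) => g s
  | Sum.inr (Sum.inr s) => h s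

section AuxGram
open MeasureTheory ProbabilityTheory Real
open scoped NNReal ENNReal

lemma integral_gaussianReal_ne (v : ℝ≥0) (hv : v ≠ 0) (g : ℝ → ℝ) :
    ∫ x, g x ∂(gaussianReal 0 v) = ∫ x, gaussianPDFReal 0 v x * g x := by
  rw [gaussianReal_of_var_ne_zero 0 hv]
  have h : (gaussianPDF 0 v) = fun x => ((Real.toNNReal (gaussianPDFReal 0 v x) : ℝ≥0) : ℝ≥0∞) := rfl
  rw [h, integral_withDensity_eq_integral_smul
    ((measurable_gaussianPDFReal 0 v).real_toNNReal) g]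
  refine integral_congr_ae (ae_of_all _ fun x => ?_)
  simp [NNReal.smul_def, Real.coe_toNNReal _ (gaussianPDFReal_nonneg 0 v x)]

lemma gauss_integrable_pow (v : ℝ≥0) (m : ℕ) :
    Integrable (fun x : ℝ => x ^ m) (gaussianReal 0 v) := by
  by_cases hv : v = 0
  · subst hv
    rw [gaussianReal_zero_var]
    exact (integrable_const ((0:ℝ)^m)).congr (ae_eq_dirac (fun x : ℝ => x ^ m)).symm
  · rw [gaussianReal_of_var_ne_zero 0 hv]
    have h : (gaussianPDF 0 v) = fun x => ((Real.toNNReal (gaussianPDFReal 0 v x) : ℝ≥0) : ℝ≥0∞) := rfl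
    rw [h, integrable_withDensity_iff_integrable_smul
      ((measurable_gaussianPDFReal 0 v).real_toNNReal)]
    have hv' : (0:ℝ) < (v:ℝ) := by positivity
    have hb : (0:ℝ) < (2 * (v:ℝ))⁻¹ := by positivity
    have key : Integrable (fun x : ℝ => x ^ m * rexp (-(2*(v:ℝ))⁻¹ * x ^ 2)) := by
      have h2 := integrable_rpow_mul_exp_neg_mul_sq hb (s := (m:ℝ))
        (lt_of_lt_of_le (by norm_num) (Nat.cast_nonneg m))
      refine h2.congr (ae_of_all _ fun x => ?_)
      simp [Real.rpow_natCast]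
    refine ((key.const_mul ((Real.sqrt (2 * π * v))⁻¹)).congr (ae_of_all _ fun x => ?_))
    show _ = (gaussianPDFReal 0 v x).toNNReal • x ^ m
    rw [NNReal.smul_def, Real.coe_toNNReal _ (gaussianPDFReal_nonneg 0 v x)]
    simp only [gaussianPDFReal, sub_zero]
    rw [show -x^2/(2*(v:ℝ)) = -(2*(v:ℝ))⁻¹ * x^2 by field_simp]
    rw [smul_eq_mul]
    ring



lemma gauss_moment_aux (v : ℝ≥0) (hv : v ≠ 0) (m : ℕ) (hm : Even m) :
    ∫ x, x ^ m ∂(gaussianReal 0 v) =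
      (Real.sqrt (2 * π * (v:ℝ)))⁻¹ *
        (2 * ((2*(v:ℝ))⁻¹ ^ (-(((m:ℝ))+1)/2) * (1/2) * Real.Gamma (((m:ℝ)+1)/2))) := by
  have hv' : (0:ℝ) < (v:ℝ) := by positivity
  have hb : (0:ℝ) < (2 * (v:ℝ))⁻¹ := by positivity
  rw [integral_gaussianReal_ne v hv]
  calc ∫ x, gaussianPDFReal 0 v x * x ^ m
      = ∫ x, (Real.sqrt (2 * π * (v:ℝ)))⁻¹ * (x ^ m * rexp (-(2*(v:ℝ))⁻¹ * x ^ 2)) := by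
        refine integral_congr_ae (ae_of_all _ fun x => ?_)
        simp only [gaussianPDFReal, sub_zero]
        rw [show -x^2/(2*(v:ℝ)) = -(2*(v:ℝ))⁻¹ * x^2 by field_simp]
        ring
    _ = (Real.sqrt (2 * π * (v:ℝ)))⁻¹ * ∫ x, x ^ m * rexp (-(2*(v:ℝ))⁻¹ * x ^ 2) :=
        integral_const_mul _ _
    _ = (Real.sqrt (2 * π * (v:ℝ)))⁻¹ *
          (2 * ∫ x in Set.Ioi (0:ℝ), x ^ m * rexp (-(2*(v:ℝ))⁻¹ * x ^ 2)) := by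
        congr 1
        rw [← integral_comp_abs (f := fun x => x ^ m * rexp (-(2*(v:ℝ))⁻¹ * x ^ 2))]
        refine integral_congr_ae (ae_of_all _ fun x => ?_)
        simp only [hm.pow_abs, sq_abs]
    _ = _ := by
        congr 1
        rw [← integral_rpow_mul_exp_neg_mul_rpow two_pos
          (lt_of_lt_of_le (by norm_num) (Nat.cast_nonneg m)) hb]
        congr 1
        refine setIntegral_congr_fun measurableSet_Ioi fun x hx => ?_
        rw [Real.rpow_natCast, show x ^ (2:ℝ) = x ^ (2:ℕ) from Real.rpow_two x ▸ (Real.rpow_natCast x 2)]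

lemma gauss_moment_two (v : ℝ≥0) : ∫ x, x ^ 2 ∂(gaussianReal 0 v) = (v:ℝ) := by
  by_cases hv : v = 0
  · subst hv
    rw [gaussianReal_zero_var, integral_dirac]
    norm_num
  · rw [gauss_moment_aux v hv 2 (by decide)]
    have hv' : (0:ℝ) < (v:ℝ) := by positivity
    have hs : (0:ℝ) < 2 * (v:ℝ) := by positivity
    have hG : Real.Gamma ((((2:ℕ):ℝ)+1)/2) = √π / 2 := by
      rw [show ((((2:ℕ):ℝ))+1)/2 = 1/2 + 1 by norm_num, Real.Gamma_add_one (by norm_num),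
        Real.Gamma_one_half_eq]
      ring
    have hpow : ((2*(v:ℝ))⁻¹) ^ (-((((2:ℕ):ℝ))+1)/2) = (2*(v:ℝ)) * Real.sqrt (2*(v:ℝ)) := by
      rw [show (-((((2:ℕ):ℝ))+1)/2) = -(3/2) by norm_num, Real.inv_rpow hs.le,
        ← Real.rpow_neg hs.le, neg_neg,
        show ((3:ℝ)/2) = 1 + 1/2 by norm_num, Real.rpow_add hs, Real.rpow_one,
        ← Real.sqrt_eq_rpow]
    have hsq : Real.sqrt (2*π*(v:ℝ)) = √π * Real.sqrt (2*(v:ℝ)) := by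
      rw [show 2*π*(v:ℝ) = π * (2*(v:ℝ)) by ring, Real.sqrt_mul pi_pos.le]
    rw [hG, hpow, hsq]
    have h1 : √π ≠ 0 := by positivity
    have h2 : Real.sqrt (2*(v:ℝ)) ≠ 0 := by positivity
    have h3 : Real.sqrt (2*(v:ℝ)) * Real.sqrt (2*(v:ℝ)) = 2*(v:ℝ) := Real.mul_self_sqrt hs.le
    field_simp

lemma gauss_moment_four (v : ℝ≥0) : ∫ x, x ^ 4 ∂(gaussianReal 0 v) = 3 * (v:ℝ)^2 := by
  by_cases hv : v = 0
  · subst hv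
    rw [gaussianReal_zero_var, integral_dirac]
    norm_num
  · rw [gauss_moment_aux v hv 4 (by decide)]
    have hv' : (0:ℝ) < (v:ℝ) := by positivity
    have hs : (0:ℝ) < 2 * (v:ℝ) := by positivity
    have hG : Real.Gamma ((((4:ℕ):ℝ)+1)/2) = 3/2 * (1/2 * √π) := by
      rw [show ((((4:ℕ):ℝ))+1)/2 = (1/2 + 1) + 1 by norm_num, Real.Gamma_add_one (by norm_num),
        Real.Gamma_add_one (by norm_num), Real.Gamma_one_half_eq]
      ring
    have hpow : ((2*(v:ℝ))⁻¹) ^ (-((((4:ℕ):ℝ))+1)/2)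
        = (2*(v:ℝ))^2 * Real.sqrt (2*(v:ℝ)) := by
      rw [show (-((((4:ℕ):ℝ))+1)/2) = -(5/2) by norm_num, Real.inv_rpow hs.le,
        ← Real.rpow_neg hs.le, neg_neg,
        show ((5:ℝ)/2) = 2 + 1/2 by norm_num, Real.rpow_add hs,
        ← Real.sqrt_eq_rpow, show (2*(v:ℝ)) ^ (2:ℝ) = (2*(v:ℝ))^(2:ℕ) from
          Real.rpow_two _]
    have hsq : Real.sqrt (2*π*(v:ℝ)) = √π * Real.sqrt (2*(v:ℝ)) := by
      rw [show 2*π*(v:ℝ) = π * (2*(v:ℝ)) by ring, Real.sqrt_mul pi_pos.le]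
    rw [hG, hpow, hsq]
    have h1 : √π ≠ 0 := by positivity
    have h2 : Real.sqrt (2*(v:ℝ)) ≠ 0 := by positivity
    have h3 : Real.sqrt (2*(v:ℝ)) * Real.sqrt (2*(v:ℝ)) = 2*(v:ℝ) := Real.mul_self_sqrt hs.le
    field_simp

section Pair
variable {ν : Measure (ℝ × ℝ)} {a b c : ℝ}

lemma sigma_nonneg (ha : 0 < a) (hb : 0 < b) (hpsd : c^2 ≤ a*b) (t u : ℝ) :
    0 ≤ t^2*a + 2*t*u*c + u^2*b := by
  nlinarith [sq_nonneg (t*a + u*c), mul_nonneg (sq_nonneg u) (sub_nonneg.mpr hpsd)]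

lemma pair_int_pow (hlaw : IsCenteredGaussianPair ν a b c) (t u : ℝ) (m : ℕ) :
    Integrable (fun p : ℝ × ℝ => (t * p.1 + u * p.2) ^ m) ν := by
  have hL : Measurable (fun p : ℝ × ℝ => t * p.1 + u * p.2) :=
    (measurable_fst.const_mul t).add (measurable_snd.const_mul u)
  have h := gauss_integrable_pow (Real.toNNReal (t ^ 2 * a + 2 * t * u * c + u ^ 2 * b)) m
  rw [← hlaw.2 t u] at h
  exact (integrable_map_measure ((measurable_id.pow_const m).aestronglyMeasurable)
    hL.aemeasurable).mp h

lemma pair_moment_two (hlaw : IsCenteredGaussianPair ν a b c)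
    (ha : 0 < a) (hb : 0 < b) (hpsd : c^2 ≤ a*b) (t u : ℝ) :
    ∫ p, (t * p.1 + u * p.2) ^ 2 ∂ν = t^2*a + 2*t*u*c + u^2*b := by
  have hL : Measurable (fun p : ℝ × ℝ => t * p.1 + u * p.2) :=
    (measurable_fst.const_mul t).add (measurable_snd.const_mul u)
  have h := integral_map (μ := ν) (f := fun x : ℝ => x ^ 2) hL.aemeasurable (by fun_prop)
  rw [← h, hlaw.2 t u, gauss_moment_two, Real.coe_toNNReal _ (sigma_nonneg ha hb hpsd t u)]

lemma pair_moment_four (hlaw : IsCenteredGaussianPair ν a b c)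
    (ha : 0 < a) (hb : 0 < b) (hpsd : c^2 ≤ a*b) (t u : ℝ) :
    ∫ p, (t * p.1 + u * p.2) ^ 4 ∂ν = 3 * (t^2*a + 2*t*u*c + u^2*b)^2 := by
  have hL : Measurable (fun p : ℝ × ℝ => t * p.1 + u * p.2) :=
    (measurable_fst.const_mul t).add (measurable_snd.const_mul u)
  have h := integral_map (μ := ν) (f := fun x : ℝ => x ^ 4) hL.aemeasurable (by fun_prop)
  rw [← h, hlaw.2 t u, gauss_moment_four, Real.coe_toNNReal _ (sigma_nonneg ha hb hpsd t u)]
end Pair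

section Pair2
variable {ν : Measure (ℝ × ℝ)} {a b c : ℝ}

lemma pair_int_fst_sq (hlaw : IsCenteredGaussianPair ν a b c) :
    Integrable (fun p : ℝ × ℝ => p.1 ^ 2) ν := by
  have h := pair_int_pow hlaw 1 0 2
  simpa using h

lemma pair_int_snd_sq (hlaw : IsCenteredGaussianPair ν a b c) :
    Integrable (fun p : ℝ × ℝ => p.2 ^ 2) ν := by
  have h := pair_int_pow hlaw 0 1 2
  simpa using h

lemma pair_int_fst_four (hlaw : IsCenteredGaussianPair ν a b c) :
    Integrable (fun p : ℝ × ℝ => p.1 ^ 4) ν := by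
  have h := pair_int_pow hlaw 1 0 4
  simpa using h

lemma pair_int_snd_four (hlaw : IsCenteredGaussianPair ν a b c) :
    Integrable (fun p : ℝ × ℝ => p.2 ^ 4) ν := by
  have h := pair_int_pow hlaw 0 1 4
  simpa using h

lemma pair_int_xy (hlaw : IsCenteredGaussianPair ν a b c) :
    Integrable (fun p : ℝ × ℝ => p.1 * p.2) ν := by
  refine ((pair_int_fst_sq hlaw).add (pair_int_snd_sq hlaw)).mono'
    ((measurable_fst.mul measurable_snd).aestronglyMeasurable) (ae_of_all _ fun p => ?_)
  simp only [Pi.add_apply]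
  rw [Real.norm_eq_abs, abs_mul]
  nlinarith [sq_nonneg (|p.1| - |p.2|), sq_abs p.1, sq_abs p.2, abs_nonneg p.1, abs_nonneg p.2]

lemma pair_int_x2y2 (hlaw : IsCenteredGaussianPair ν a b c) :
    Integrable (fun p : ℝ × ℝ => (p.1 * p.2) ^ 2) ν := by
  refine ((pair_int_fst_four hlaw).add (pair_int_snd_four hlaw)).mono'
    (((measurable_fst.mul measurable_snd).pow_const 2).aestronglyMeasurable)
    (ae_of_all _ fun p => ?_)
  simp only [Pi.add_apply]
  rw [Real.norm_eq_abs, abs_of_nonneg (sq_nonneg _)]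
  nlinarith [sq_nonneg (p.1^2 - p.2^2), sq_nonneg p.1, sq_nonneg p.2]

lemma pair_exp_fst_sq (hlaw : IsCenteredGaussianPair ν a b c)
    (ha : 0 < a) (hb : 0 < b) (hpsd : c^2 ≤ a*b) :
    ∫ p, p.1 ^ 2 ∂ν = a := by
  have h := pair_moment_two hlaw ha hb hpsd 1 0
  simpa using h

lemma pair_exp_snd_sq (hlaw : IsCenteredGaussianPair ν a b c)
    (ha : 0 < a) (hb : 0 < b) (hpsd : c^2 ≤ a*b) :
    ∫ p, p.2 ^ 2 ∂ν = b := by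
  have h := pair_moment_two hlaw ha hb hpsd 0 1
  simpa using h

lemma pair_exp_fst_four (hlaw : IsCenteredGaussianPair ν a b c)
    (ha : 0 < a) (hb : 0 < b) (hpsd : c^2 ≤ a*b) :
    ∫ p, p.1 ^ 4 ∂ν = 3 * a^2 := by
  have h := pair_moment_four hlaw ha hb hpsd 1 0
  simpa using h

lemma pair_exp_snd_four (hlaw : IsCenteredGaussianPair ν a b c)
    (ha : 0 < a) (hb : 0 < b) (hpsd : c^2 ≤ a*b) :
    ∫ p, p.2 ^ 4 ∂ν = 3 * b^2 := by
  have h := pair_moment_four hlaw ha hb hpsd 0 1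
  simpa using h

lemma pair_exp_xy (hlaw : IsCenteredGaussianPair ν a b c)
    (ha : 0 < a) (hb : 0 < b) (hpsd : c^2 ≤ a*b) :
    ∫ p, p.1 * p.2 ∂ν = c := by
  have h2 := pair_moment_two hlaw ha hb hpsd 1 1
  simp only [one_mul, one_pow, mul_one] at h2
  have hxy := pair_int_xy hlaw
  have hx2 := pair_int_fst_sq hlaw
  have hy2 := pair_int_snd_sq hlaw
  have hsplit : ∫ p, (p.1 + p.2) ^ 2 ∂ν
      = (∫ p, p.1 ^ 2 ∂ν) + (2 * ∫ p, p.1 * p.2 ∂ν + ∫ p, p.2 ^ 2 ∂ν) := by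
    have hB : Integrable (fun p : ℝ × ℝ => 2 * (p.1 * p.2) + p.2 ^ 2) ν :=
      (hxy.const_mul 2).add hy2
    rw [show (∫ p, (p.1 + p.2) ^ 2 ∂ν)
        = ∫ p, (p.1 ^ 2 + (2 * (p.1 * p.2) + p.2 ^ 2)) ∂ν from
      integral_congr_ae (ae_of_all _ fun p => by ring),
      integral_add hx2 hB, integral_add (hxy.const_mul 2) hy2, integral_const_mul]
  rw [hsplit, pair_exp_fst_sq hlaw ha hb hpsd, pair_exp_snd_sq hlaw ha hb hpsd] at h2
  linarith

lemma pair_exp_x2y2 (hlaw : IsCenteredGaussianPair ν a b c)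
    (ha : 0 < a) (hb : 0 < b) (hpsd : c^2 ≤ a*b) :
    ∫ p, (p.1 * p.2) ^ 2 ∂ν = a * b + 2 * c^2 := by
  have hp := pair_moment_four hlaw ha hb hpsd 1 1
  simp only [one_mul, one_pow, mul_one] at hp
  have hm := pair_moment_four hlaw ha hb hpsd 1 (-1)
  have hintp : Integrable (fun p : ℝ × ℝ => (p.1 + p.2) ^ 4) ν := by
    have h := pair_int_pow hlaw 1 1 4
    simpa using h
  have hintm : Integrable (fun p : ℝ × ℝ => (1 * p.1 + -1 * p.2) ^ 4) ν :=
    pair_int_pow hlaw 1 (-1) 4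
  have hx4 := pair_int_fst_four hlaw
  have hy4 := pair_int_snd_four hlaw
  have hx2y2 := pair_int_x2y2 hlaw
  have hsum : (∫ p, (p.1 + p.2) ^ 4 ∂ν) + (∫ p, (1 * p.1 + -1 * p.2) ^ 4 ∂ν)
      = 2 * (∫ p, p.1 ^ 4 ∂ν) + (12 * (∫ p, (p.1 * p.2) ^ 2 ∂ν) + 2 * ∫ p, p.2 ^ 4 ∂ν) := by
    have hB : Integrable (fun p : ℝ × ℝ => 12 * (p.1 * p.2) ^ 2 + 2 * p.2 ^ 4) ν :=
      (hx2y2.const_mul 12).add (hy4.const_mul 2)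
    rw [← integral_add hintp hintm,
      show (∫ p, ((p.1 + p.2) ^ 4 + (1 * p.1 + -1 * p.2) ^ 4) ∂ν)
        = ∫ p, (2 * p.1 ^ 4 + (12 * (p.1 * p.2) ^ 2 + 2 * p.2 ^ 4)) ∂ν from
      integral_congr_ae (ae_of_all _ fun p => by ring),
      integral_add (hx4.const_mul 2) hB, integral_add (hx2y2.const_mul 12) (hy4.const_mul 2),
      integral_const_mul, integral_const_mul, integral_const_mul]
  rw [hp, hm, pair_exp_fst_four hlaw ha hb hpsd, pair_exp_snd_four hlaw ha hb hpsd] at hsum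
  nlinarith [hsum]

end Pair2

end AuxGram

/-- Proposition 2 (off-diagonal variance formula for the bias-corrected Gram entry). -/
theorem bias_corrected_gram_offdiag_variance
    {Ω : Type*} [MeasurableSpace Ω] (μ : Measure Ω) [IsProbabilityMeasure μ]
    (Kii Kjj Kij : ℝ) (hKii : 0 < Kii) (hKjj : 0 < Kjj) (hKpsd : Kij ^ 2 ≤ Kii * Kjj)
    (D : ℕ) (hD : 1 ≤ D)
    (pi pj : Fin D → ℝ)
    (hpi : ∀ s, 0 < pi s ∧ pi s ≤ 1) (hpj : ∀ s, 0 < pj s ∧ pj s ≤ 1)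
    (Yt : Fin D → Ω → ℝ × ℝ) (hYt : ∀ s, Measurable (Yt s))
    (hYtlaw : ∀ s, IsCenteredGaussianPair (μ.map (Yt s)) Kii Kjj Kij)
    (Hi Hj : Fin D → Ω → ℝ) (hHi : ∀ s, Measurable (Hi s)) (hHj : ∀ s, Measurable (Hj s))
    (hHi01 : ∀ s ω, Hi s ω = 0 ∨ Hi s ω = 1) (hHj01 : ∀ s ω, Hj s ω = 0 ∨ Hj s ω = 1)
    (hHiP : ∀ s, μ {ω | Hi s ω = 1} = ENNReal.ofReal (pi s))
    (hHjP : ∀ s, μ {ω | Hj s ω = 1} = ENNReal.ofReal (pj s))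
    (hindep : @iIndepFun _ _ _ _ mixedMS (mixedFam Hi Hj Yt) μ)
    (Yi Yj : Fin D → Ω → ℝ)
    (hYi : Yi = fun s ω => Hi s ω * (Yt s ω).1) (hYj : Yj = fun s ω => Hj s ω * (Yt s ω).2)
    (G Gtilde : Ω → ℝ)
    (hG : G = fun ω => ∑ s, Yi s ω * Yj s ω)
    (hGt : Gtilde = fun ω => G ω / ∑ s, pi s * pj s) :
    ∫ ω, Gtilde ω ^ 2 ∂μ - (∫ ω, Gtilde ω ∂μ) ^ 2 =
      (Kii * Kjj * (∑ s, pi s * pj s) +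
        Kij ^ 2 * ∑ s, (2 * pi s * pj s - pi s ^ 2 * pj s ^ 2)) /
      (∑ s, pi s * pj s) ^ 2 := by
    classical
  haveI : Nonempty (Fin D) := ⟨⟨0, hD⟩⟩
  have hmeas : ∀ i, @Measurable _ _ _ (mixedMS i) (mixedFam Hi Hj Yt i) := by
    rintro (s | s | s)
    · exact hHi s
    · exact hHj s
    · exact hYt s
  set S : ℝ := ∑ s, pi s * pj s with hS_def
  have hS : 0 < S := Finset.sum_pos (fun s _ => mul_pos (hpi s).1 (hpj s).1) Finset.univ_nonempty
  set g1 : ℝ × ℝ → ℝ := fun q => q.1 * q.2 with hg1_def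
  set g2 : ℝ × ℝ → ℝ := fun q => (q.1 * q.2) ^ 2 with hg2_def
  have hg1 : Measurable g1 := measurable_fst.mul measurable_snd
  have hg2 : Measurable g2 := (measurable_fst.mul measurable_snd).pow_const 2
  set Z : Fin D → Ω → ℝ := fun s ω => Hi s ω * (Hj s ω * g1 (Yt s ω)) with hZ_def
  have hZmeas : ∀ s, Measurable (Z s) := fun s =>
    (hHi s).mul ((hHj s).mul (hg1.comp (hYt s)))
  have hint1 : ∀ s, Integrable (fun ω => g1 (Yt s ω)) μ := fun s =>
    (integrable_map_measure (hg1.aestronglyMeasurable) (hYt s).aemeasurable).mp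
      (pair_int_xy (hYtlaw s))
  have hint2 : ∀ s, Integrable (fun ω => g2 (Yt s ω)) μ := fun s =>
    (integrable_map_measure (hg2.aestronglyMeasurable) (hYt s).aemeasurable).mp
      (pair_int_x2y2 (hYtlaw s))
  have hHiInt : ∀ s, Integrable (Hi s) μ := by
    intro s
    refine (integrable_const (1:ℝ)).mono' ((hHi s).aestronglyMeasurable) (ae_of_all _ fun ω => ?_)
    rcases hHi01 s ω with h | h <;> simp [h]
  have hHjInt : ∀ s, Integrable (Hj s) μ := by
    intro s
    refine (integrable_const (1:ℝ)).mono' ((hHj s).aestronglyMeasurable) (ae_of_all _ fun ω => ?_)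
    rcases hHj01 s ω with h | h <;> simp [h]
  have hHiE : ∀ s, ∫ ω, Hi s ω ∂μ = pi s := by
    intro s
    have hset : MeasurableSet {ω | Hi s ω = 1} := hHi s (measurableSet_singleton 1)
    have hind : (fun ω => Hi s ω) = Set.indicator {ω | Hi s ω = 1} (fun _ => (1:ℝ)) := by
      funext ω
      rcases hHi01 s ω with h | h <;> simp [Set.indicator_apply, h]
    rw [hind, integral_indicator_const (1:ℝ) hset, measureReal_def, hHiP s, smul_eq_mul, mul_one,
      ENNReal.toReal_ofReal (hpi s).1.le]
  have hHjE : ∀ s, ∫ ω, Hj s ω ∂μ = pj s := by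
    intro s
    have hset : MeasurableSet {ω | Hj s ω = 1} := hHj s (measurableSet_singleton 1)
    have hind : (fun ω => Hj s ω) = Set.indicator {ω | Hj s ω = 1} (fun _ => (1:ℝ)) := by
      funext ω
      rcases hHj01 s ω with h | h <;> simp [Set.indicator_apply, h]
    rw [hind, integral_indicator_const (1:ℝ) hset, measureReal_def, hHjP s, smul_eq_mul, mul_one,
      ENNReal.toReal_ofReal (hpj s).1.le]
  have key : ∀ (s : Fin D) (g : ℝ × ℝ → ℝ), Measurable g →
      ∫ ω, Hi s ω * (Hj s ω * g (Yt s ω)) ∂μ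
        = pi s * (pj s * ∫ q, g q ∂(μ.map (Yt s))) := by
    intro s g hg
    have hpair : IndepFun (fun ω => (Hj s ω, Yt s ω)) (Hi s) μ :=
      hindep.indepFun_prodMk hmeas (Sum.inr (Sum.inl s)) (Sum.inr (Sum.inr s)) (Sum.inl s)
        (by simp) (by simp)
    have h1 : IndepFun (Hi s) (fun ω => Hj s ω * g (Yt s ω)) μ :=
      (hpair.comp (measurable_fst.mul (hg.comp measurable_snd)) measurable_id).symm
    have h2 : IndepFun (Hj s) (fun ω => g (Yt s ω)) μ := by
      have hbase : IndepFun (Hj s) (Yt s) μ :=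
        hindep.indepFun (show (Sum.inr (Sum.inl s) : Fin D ⊕ Fin D ⊕ Fin D)
          ≠ Sum.inr (Sum.inr s) by simp)
      exact hbase.comp measurable_id hg
    rw [h1.integral_fun_mul_eq_mul_integral ((hHi s).aestronglyMeasurable)
        (((hHj s).mul (hg.comp (hYt s))).aestronglyMeasurable),
      h2.integral_fun_mul_eq_mul_integral ((hHj s).aestronglyMeasurable)
        ((hg.comp (hYt s)).aestronglyMeasurable),
      hHiE s, hHjE s,
      integral_map (hYt s).aemeasurable (hg.aestronglyMeasurable)]
  set e : Fin D → ℝ := fun s => pi s * pj s * Kij with he_def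
  set m2 : Fin D → ℝ := fun s => pi s * pj s * (Kii * Kjj + 2 * Kij ^ 2) with hm2_def
  have hEZ : ∀ s, ∫ ω, Z s ω ∂μ = e s := by
    intro s
    have h1 : ∫ ω, Z s ω ∂μ = ∫ ω, Hi s ω * (Hj s ω * g1 (Yt s ω)) ∂μ := by
      simp only [hZ_def]
    have h2 : ∫ q, g1 q ∂(μ.map (Yt s)) = Kij := by
      simp only [hg1_def]
      exact pair_exp_xy (hYtlaw s) hKii hKjj hKpsd
    rw [h1, key s g1 hg1, h2]
    simp only [he_def]
    ring
  have hZsq : ∀ s ω, Z s ω ^ 2 = Hi s ω * (Hj s ω * g2 (Yt s ω)) := by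
    intro s ω
    simp only [hZ_def, hg1_def, hg2_def]
    rcases hHi01 s ω with h | h <;> rcases hHj01 s ω with h' | h' <;>
      rw [h, h'] <;> ring
  have hEZsq : ∀ s, ∫ ω, Z s ω ^ 2 ∂μ = m2 s := by
    intro s
    have h2 : ∫ q, g2 q ∂(μ.map (Yt s)) = Kii * Kjj + 2 * Kij ^ 2 := by
      simp only [hg2_def]
      exact pair_exp_x2y2 (hYtlaw s) hKii hKjj hKpsd
    rw [integral_congr_ae (ae_of_all _ (hZsq s)), key s g2 hg2, h2]
    simp only [hm2_def]
    ring
  have hZint : ∀ s, Integrable (Z s) μ := by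
    intro s
    refine (hint1 s).abs.mono' (hZmeas s).aestronglyMeasurable (ae_of_all _ fun ω => ?_)
    simp only [hZ_def, Real.norm_eq_abs, abs_mul]
    rcases hHi01 s ω with h | h <;> rcases hHj01 s ω with h' | h' <;>
      simp [h, h', abs_nonneg]
  have hZsqint : ∀ s, Integrable (fun ω => Z s ω ^ 2) μ := by
    intro s
    refine (hint2 s).abs.mono' (((hZmeas s).pow_const 2).aestronglyMeasurable)
      (ae_of_all _ fun ω => ?_)
    rw [Real.norm_eq_abs, hZsq s ω, abs_mul, abs_mul]
    rcases hHi01 s ω with h | h <;> rcases hHj01 s ω with h' | h' <;>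
      simp [h, h', abs_nonneg]
  have hZZindep : ∀ s t : Fin D, s ≠ t → IndepFun (Z s) (Z t) μ := by
    intro s t hst
    set T : Fin D → Finset (Fin D ⊕ Fin D ⊕ Fin D) := fun x =>
      {Sum.inl x, Sum.inr (Sum.inl x), Sum.inr (Sum.inr x)} with hT_def
    have hdisj : Disjoint (T s) (T t) := by
      simp only [hT_def, Finset.disjoint_left, Finset.mem_insert, Finset.mem_singleton]
      rintro i (rfl | rfl | rfl) <;> simp [hst]
    have base := hindep.indepFun_finset (T s) (T t) hdisj hmeas
    have hmem1 : ∀ x : Fin D, (Sum.inl x : Fin D ⊕ Fin D ⊕ Fin D) ∈ T x := by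
      intro x; simp [hT_def]
    have hmem2 : ∀ x : Fin D, (Sum.inr (Sum.inl x) : Fin D ⊕ Fin D ⊕ Fin D) ∈ T x := by
      intro x; simp [hT_def]
    have hmem3 : ∀ x : Fin D, (Sum.inr (Sum.inr x) : Fin D ⊕ Fin D ⊕ Fin D) ∈ T x := by
      intro x; simp [hT_def]
    let gx : (x : Fin D) →
        (∀ i : (T x : Finset (Fin D ⊕ Fin D ⊕ Fin D)),
          mixedCod (Fin D) (Fin D) (Fin D) (i : Fin D ⊕ Fin D ⊕ Fin D)) →
          mixedCod (Fin D) (Fin D) (Fin D) (Sum.inl x) ×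
            mixedCod (Fin D) (Fin D) (Fin D) (Sum.inr (Sum.inl x)) ×
            mixedCod (Fin D) (Fin D) (Fin D) (Sum.inr (Sum.inr x)) := fun x v =>
      ⟨v ⟨Sum.inl x, hmem1 x⟩, v ⟨Sum.inr (Sum.inl x), hmem2 x⟩, v ⟨Sum.inr (Sum.inr x), hmem3 x⟩⟩
    have hgxm : ∀ x : Fin D,
        @Measurable _ _ (MeasurableSpace.pi
          (m := fun i : (T x : Finset (Fin D ⊕ Fin D ⊕ Fin D)) =>
            mixedMS (i : Fin D ⊕ Fin D ⊕ Fin D)))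
          (@Prod.instMeasurableSpace _ _ (mixedMS _)
            (@Prod.instMeasurableSpace _ _ (mixedMS _) (mixedMS _))) (gx x) := by
      intro x
      refine Measurable.prodMk ?_ (Measurable.prodMk ?_ ?_) <;>
        exact @measurable_pi_apply _ _
          (fun i : (T x : Finset (Fin D ⊕ Fin D ⊕ Fin D)) =>
            mixedMS (i : Fin D ⊕ Fin D ⊕ Fin D)) _
    have hI : IndepFun (fun ω => (Hi s ω, Hj s ω, Yt s ω))
        (fun ω => (Hi t ω, Hj t ω, Yt t ω)) μ := base.comp (hgxm s) (hgxm t)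
    have hψ : Measurable (fun q : ℝ × ℝ × (ℝ × ℝ) => q.1 * (q.2.1 * (q.2.2.1 * q.2.2.2))) := by
      fun_prop
    simp only [hZ_def, hg1_def]
    exact hI.comp hψ hψ
  have hZZint : ∀ s t : Fin D, Integrable (fun ω => Z s ω * Z t ω) μ := by
    intro s t
    by_cases hst : s = t
    · subst hst
      exact (hZsqint s).congr (ae_of_all _ fun ω => pow_two (Z s ω))
    · exact ((hZZindep s t hst).integrable_mul (hZint s) (hZint t)).congr
        (ae_of_all _ fun ω => rfl)
  have hEZZ : ∀ s t : Fin D, ∫ ω, Z s ω * Z t ω ∂μ = if s = t then m2 s else e s * e t := by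
    intro s t
    by_cases hst : s = t
    · subst hst
      rw [if_pos rfl, ← hEZsq s]
      exact integral_congr_ae (ae_of_all _ fun ω => (pow_two (Z s ω)).symm)
    · rw [if_neg hst, (hZZindep s t hst).integral_fun_mul_eq_mul_integral (hZmeas s).aestronglyMeasurable
        (hZmeas t).aestronglyMeasurable, hEZ s, hEZ t]
  have hGZ : ∀ ω, G ω = ∑ s, Z s ω := by
    intro ω
    rw [hG]
    refine Finset.sum_congr rfl fun s _ => ?_
    rw [hYi, hYj]
    simp only [hZ_def, hg1_def]
    ring
  have hEG : ∫ ω, G ω ∂μ = ∑ s, e s := by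
    rw [integral_congr_ae (ae_of_all _ hGZ), integral_finset_sum _ fun s _ => hZint s]
    exact Finset.sum_congr rfl fun s _ => hEZ s
  have hEG2 : ∫ ω, G ω ^ 2 ∂μ = ∑ s, ∑ t, (if s = t then m2 s else e s * e t) := by
    have hsq : ∀ ω, G ω ^ 2 = ∑ s, ∑ t, Z s ω * Z t ω := by
      intro ω
      rw [hGZ ω, sq, Finset.sum_mul_sum]
    rw [integral_congr_ae (ae_of_all _ hsq),
      integral_finset_sum _ fun s _ => integrable_finset_sum _ fun t _ => hZZint s t]
    refine Finset.sum_congr rfl fun s _ => ?_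
    rw [integral_finset_sum _ fun t _ => hZZint s t]
    exact Finset.sum_congr rfl fun t _ => hEZZ s t
  have hdiag : (∑ s, ∑ t, (if s = t then m2 s else e s * e t))
      = (∑ s, e s) ^ 2 + ∑ s, (m2 s - e s ^ 2) := by
    have h1 : ∀ s : Fin D, (∑ t, (if s = t then m2 s else e s * e t))
        = (∑ t, e s * e t) + (m2 s - e s ^ 2) := by
      intro s
      have h0 : ∀ t : Fin D, (if s = t then m2 s else e s * e t)
          = e s * e t + (if s = t then m2 s - e s ^ 2 else 0) := by
        intro t
        by_cases h : s = t
        · subst h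
          rw [if_pos rfl, if_pos rfl]
          ring
        · rw [if_neg h, if_neg h, add_zero]
      rw [Finset.sum_congr rfl fun t _ => h0 t, Finset.sum_add_distrib,
        Finset.sum_ite_eq Finset.univ s (fun _ => m2 s - e s ^ 2)]
      simp
    rw [Finset.sum_congr rfl fun s _ => h1 s, Finset.sum_add_distrib, sq,
      Finset.sum_mul_sum]
  have hSne : S ≠ 0 := ne_of_gt hS
  have hGt1 : ∫ ω, Gtilde ω ∂μ = (∑ s, e s) / S := by
    rw [hGt]
    simp only [div_eq_mul_inv]
    rw [integral_mul_const, hEG]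
  have hGt2 : ∫ ω, Gtilde ω ^ 2 ∂μ = ((∑ s, e s) ^ 2 + ∑ s, (m2 s - e s ^ 2)) / S ^ 2 := by
    rw [hGt]
    simp only [div_pow]
    simp only [div_eq_mul_inv]
    rw [integral_mul_const, hEG2, hdiag]
  rw [hGt1, hGt2]
  have hnum : (∑ s, (m2 s - e s ^ 2))
      = Kii * Kjj * S + Kij ^ 2 * ∑ s, (2 * pi s * pj s - pi s ^ 2 * pj s ^ 2) := by
    have h0 : ∀ s : Fin D, m2 s - e s ^ 2
        = Kii * Kjj * (pi s * pj s) + Kij ^ 2 * (2 * pi s * pj s - pi s ^ 2 * pj s ^ 2) := by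
      intro s
      simp only [hm2_def, he_def]
      ring
    rw [Finset.sum_congr rfl fun s _ => h0 s, Finset.sum_add_distrib, ← Finset.mul_sum,
      ← Finset.mul_sum, ← hS_def]
  rw [hnum]
  field_simp
  try ring
end

section
/- 2·K_ii² / (D·p̄_i) ≤ Var[G̃_ii] ≤ (K_ii²/D)·(3/p̄_i − 1), where p̄_i = (1/D)·Σ_{s=1}^D p_{is}. (Proposition 2, two-sided bounds on the variance of the bias-corrected diagonal Gram entry.) -/
open MeasureTheory ProbabilityTheory Filter Finset Real

lemma myInt {b : ℝ} (hb : 0 < b) (k : ℕ) :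
    Integrable fun x : ℝ => x ^ k * Real.exp (-b * x ^ 2) := by
  have h := integrable_rpow_mul_exp_neg_mul_sq hb (s := (k : ℝ))
    (by exact_mod_cast neg_one_lt_zero.trans_le (Nat.cast_nonneg k))
  simpa [Real.rpow_natCast] using h

lemma myTop {b : ℝ} (hb : 0 < b) (k : ℕ) :
    Tendsto (fun x : ℝ => x ^ k * Real.exp (-b * x ^ 2)) atTop (nhds 0) := by
  have hexp : Tendsto (fun x : ℝ => Real.exp (-(1/2) * x)) atTop (nhds 0) := by
    have h2 : Tendsto (fun x : ℝ => -(1/2) * x) atTop atBot :=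
      tendsto_id.const_mul_atTop_of_neg (by norm_num)
    exact Real.tendsto_exp_atBot.comp h2
  have h := (rpow_mul_exp_neg_mul_sq_isLittleO_exp_neg hb (k : ℝ)).isBigO.trans_tendsto hexp
  simpa [Real.rpow_natCast] using h

lemma myBot {b : ℝ} (hb : 0 < b) (k : ℕ) :
    Tendsto (fun x : ℝ => x ^ k * Real.exp (-b * x ^ 2)) atBot (nhds 0) := by
  have h1 : Tendsto (fun x : ℝ => (-1 : ℝ) ^ k * (x ^ k * Real.exp (-b * x ^ 2))) atTop
      (nhds 0) := by simpa using (myTop hb k).const_mul ((-1 : ℝ) ^ k)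
  have h2 := h1.comp (tendsto_neg_atBot_atTop : Tendsto (fun x : ℝ => -x) atBot atTop)
  refine h2.congr fun x => ?_
  show (-1 : ℝ) ^ k * ((-x) ^ k * Real.exp (-b * (-x) ^ 2)) = _
  rw [neg_pow, neg_sq]
  ring_nf
  rw [mul_comm k 2, pow_mul]
  norm_num

lemma myZero {f f' : ℝ → ℝ} (hderiv : ∀ x, HasDerivAt f (f' x) x)
    (hint : Integrable f') (htop : Tendsto f atTop (nhds 0))
    (hbot : Tendsto f atBot (nhds 0)) : ∫ x, f' x = 0 := by
  have h1 : ∫ x in Set.Ioi (0:ℝ), f' x = 0 - f 0 :=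
    integral_Ioi_of_hasDerivAt_of_tendsto (hderiv 0).continuousAt.continuousWithinAt
      (fun x _ => hderiv x) hint.integrableOn htop
  have h2 : ∫ x in Set.Iic (0:ℝ), f' x = f 0 - 0 :=
    integral_Iic_of_hasDerivAt_of_tendsto (hderiv 0).continuousAt.continuousWithinAt
      (fun x _ => hderiv x) hint.integrableOn hbot
  have h3 : (∫ x in Set.Iic (0:ℝ), f' x) + ∫ x in Set.Ioi (0:ℝ), f' x = ∫ x, f' x :=
    intervalIntegral.integral_Iic_add_Ioi hint.integrableOn hint.integrableOn
  rw [← h3, h1, h2]; ring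

lemma myRec {b : ℝ} (hb : 0 < b) (k : ℕ) :
    ∫ x : ℝ, x ^ (k + 2) * Real.exp (-b * x ^ 2)
      = (k + 1) / (2 * b) * ∫ x : ℝ, x ^ k * Real.exp (-b * x ^ 2) := by
  set f : ℝ → ℝ := fun x => x ^ (k + 1) * Real.exp (-b * x ^ 2) with hf
  set g : ℝ → ℝ := fun x => (k + 1) * (x ^ k * Real.exp (-b * x ^ 2))
      - 2 * b * (x ^ (k + 2) * Real.exp (-b * x ^ 2)) with hg
  have hderiv : ∀ x, HasDerivAt f (g x) x := by
    intro x
    have h1 : HasDerivAt (fun x : ℝ => x ^ (k + 1)) ((k + 1) * x ^ k) x := by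
      simpa using hasDerivAt_pow (k + 1) x
    have h3 : HasDerivAt (fun x : ℝ => -b * x ^ 2) (-b * (2 * x)) x := by
      simpa using (hasDerivAt_pow 2 x).const_mul (-b)
    have := h1.mul h3.exp
    refine this.congr_deriv ?_
    simp only [g]
    ring
  have hint : Integrable g :=
    (((myInt hb k).const_mul _).sub ((myInt hb (k + 2)).const_mul _))
  have h0 : ∫ x, g x = 0 := myZero hderiv hint (myTop hb (k + 1)) (myBot hb (k + 1))
  have hsplit : ∫ x, g x = (k + 1) * (∫ x, x ^ k * Real.exp (-b * x ^ 2))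
      - 2 * b * ∫ x, x ^ (k + 2) * Real.exp (-b * x ^ 2) := by
    rw [hg, integral_sub ((myInt hb k).const_mul _) ((myInt hb (k + 2)).const_mul _),
      integral_const_mul, integral_const_mul]
  rw [hsplit] at h0
  set A := ∫ x : ℝ, x ^ k * Real.exp (-b * x ^ 2)
  set B := ∫ x : ℝ, x ^ (k + 2) * Real.exp (-b * x ^ 2)
  have hb' : (2 : ℝ) * b ≠ 0 := by positivity
  field_simp
  linarith

lemma myI2 {b : ℝ} (hb : 0 < b) :
    ∫ x : ℝ, x ^ 2 * Real.exp (-b * x ^ 2) = 1 / (2 * b) * Real.sqrt (π / b) := by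
  have h := myRec hb 0
  simp only [pow_zero, one_mul, Nat.cast_zero, zero_add, Nat.reduceAdd] at h
  rw [integral_gaussian b] at h
  exact h

lemma myI4 {b : ℝ} (hb : 0 < b) :
    ∫ x : ℝ, x ^ 4 * Real.exp (-b * x ^ 2)
      = 3 / (2 * b) * (1 / (2 * b) * Real.sqrt (π / b)) := by
  have h := myRec hb 2
  rw [myI2 hb] at h
  norm_num at h ⊢
  linarith

open scoped NNReal ENNReal

lemma gPdfEq (v : ℝ≥0) (hv : v ≠ 0) (x : ℝ) :
    gaussianPDFReal 0 v x
      = (Real.sqrt (2 * π * (v:ℝ)))⁻¹ * Real.exp (-(2 * (v:ℝ))⁻¹ * x ^ 2) := by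
  have hv' : (0:ℝ) < (v:ℝ) := by
    exact lt_of_le_of_ne v.coe_nonneg (by exact_mod_cast Ne.symm hv)
  rw [gaussianPDFReal]
  congr 1
  congr 1
  field_simp
  ring

lemma gReduce (v : ℝ≥0) (hv : v ≠ 0) (g : ℝ → ℝ) :
    ∫ x, g x ∂(gaussianReal 0 v)
      = ∫ x : ℝ, (Real.sqrt (2 * π * (v:ℝ)))⁻¹
          * (g x * Real.exp (-(2 * (v:ℝ))⁻¹ * x ^ 2)) := by
  rw [gaussianReal_of_var_ne_zero 0 hv]
  have hpdf : gaussianPDF 0 v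
      = fun x => (((gaussianPDFReal 0 v x).toNNReal : ℝ≥0) : ℝ≥0∞) := rfl
  rw [hpdf, integral_withDensity_eq_integral_smul
    ((measurable_gaussianPDFReal 0 v).real_toNNReal) g]
  congr 1
  funext x
  rw [NNReal.smul_def, smul_eq_mul, Real.coe_toNNReal _ (gaussianPDFReal_nonneg 0 v x),
    gPdfEq v hv x]
  ring

lemma gMoment2 (v : ℝ≥0) (hv : v ≠ 0) :
    ∫ x, x ^ 2 ∂(gaussianReal 0 v) = (v : ℝ) := by
  have hv' : (0:ℝ) < (v:ℝ) :=
    lt_of_le_of_ne v.coe_nonneg (by exact_mod_cast Ne.symm hv)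
  have hb : (0:ℝ) < (2 * (v:ℝ))⁻¹ := by positivity
  rw [gReduce v hv, integral_const_mul, myI2 hb]
  have h1 : (1 : ℝ) / (2 * (2 * (v:ℝ))⁻¹) = v := by field_simp
  have h2 : Real.sqrt (π / (2 * (v:ℝ))⁻¹) = Real.sqrt (2 * π * v) := by
    congr 1; field_simp
  rw [h1, h2]
  rw [← mul_assoc, mul_comm ((Real.sqrt (2 * π * (v:ℝ)))⁻¹) _, mul_assoc,
    inv_mul_cancel₀ (by positivity), mul_one]

lemma gMoment4 (v : ℝ≥0) (hv : v ≠ 0) :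
    ∫ x, x ^ 4 ∂(gaussianReal 0 v) = 3 * (v : ℝ) ^ 2 := by
  have hv' : (0:ℝ) < (v:ℝ) :=
    lt_of_le_of_ne v.coe_nonneg (by exact_mod_cast Ne.symm hv)
  have hb : (0:ℝ) < (2 * (v:ℝ))⁻¹ := by positivity
  rw [gReduce v hv, integral_const_mul, myI4 hb]
  have h1 : (3 : ℝ) / (2 * (2 * (v:ℝ))⁻¹) = 3 * v := by field_simp
  have h15 : (1 : ℝ) / (2 * (2 * (v:ℝ))⁻¹) = v := by field_simp
  have h2 : Real.sqrt (π / (2 * (v:ℝ))⁻¹) = Real.sqrt (2 * π * v) := by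
    congr 1; field_simp
  rw [h1, h15, h2]
  have : (Real.sqrt (2 * π * (v:ℝ)))⁻¹ * (3 * ↑v * (↑v * Real.sqrt (2 * π * ↑v)))
      = 3 * (v:ℝ) ^ 2 * ((Real.sqrt (2 * π * (v:ℝ)))⁻¹ * Real.sqrt (2 * π * ↑v)) := by ring
  rw [this, inv_mul_cancel₀ (by positivity), mul_one]

lemma gIntegrable (v : ℝ≥0) (hv : v ≠ 0) (k : ℕ) :
    Integrable (fun x : ℝ => x ^ k) (gaussianReal 0 v) := by
  have hv' : (0:ℝ) < (v:ℝ) :=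
    lt_of_le_of_ne v.coe_nonneg (by exact_mod_cast Ne.symm hv)
  have hb : (0:ℝ) < (2 * (v:ℝ))⁻¹ := by positivity
  rw [gaussianReal_of_var_ne_zero 0 hv]
  rw [integrable_withDensity_iff (measurable_gaussianPDF 0 v)
    (ae_of_all _ fun x => ENNReal.ofReal_lt_top)]
  have : (fun x : ℝ => x ^ k * (gaussianPDF 0 v x).toReal)
      = fun x : ℝ => (Real.sqrt (2 * π * (v:ℝ)))⁻¹
          * (x ^ k * Real.exp (-(2 * (v:ℝ))⁻¹ * x ^ 2)) := by
    funext x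
    rw [gaussianPDF, ENNReal.toReal_ofReal (gaussianPDFReal_nonneg 0 v x), gPdfEq v hv x]
    ring
  rw [this]
  exact (myInt hb k).const_mul _

lemma mapMoment {Ω : Type*} [MeasurableSpace Ω] (μ : Measure Ω) (X : Ω → ℝ)
    (hX : Measurable X) (v : ℝ≥0) (hlaw : μ.map X = gaussianReal 0 v) (k : ℕ) :
    ∫ ω, (X ω) ^ k ∂μ = ∫ x, x ^ k ∂(gaussianReal 0 v) := by
  rw [← hlaw]
  exact (integral_map hX.aemeasurable
    ((measurable_id.pow_const k).aestronglyMeasurable)).symm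

lemma mapIntegrable {Ω : Type*} [MeasurableSpace Ω] (μ : Measure Ω) (X : Ω → ℝ)
    (hX : Measurable X) (v : ℝ≥0) (hv : v ≠ 0) (hlaw : μ.map X = gaussianReal 0 v) (k : ℕ) :
    Integrable (fun ω => (X ω) ^ k) μ := by
  have h := gIntegrable v hv k
  rw [← hlaw] at h
  exact (integrable_map_measure ((measurable_id.pow_const k).aestronglyMeasurable)
    hX.aemeasurable).mp h

/-- Proposition 2 (two-sided bounds on the variance of the bias-corrected diagonal Gram entry). -/
theorem bias_corrected_gram_diag_var_bounds
    {Ω : Type*} [MeasurableSpace Ω] (μ : Measure Ω) [IsProbabilityMeasure μ]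
    (Kii : ℝ) (hKii : 0 < Kii)
    (D : ℕ) (hD : 1 ≤ D)
    (pi : Fin D → ℝ) (hpi : ∀ s, 0 < pi s ∧ pi s ≤ 1)
    (Yt : Fin D → Ω → ℝ) (hYt : ∀ s, Measurable (Yt s))
    (hYtlaw : ∀ s, μ.map (Yt s) = gaussianReal 0 (Real.toNNReal Kii))
    (Hi : Fin D → Ω → ℝ) (hHi : ∀ s, Measurable (Hi s))
    (hHi01 : ∀ s ω, Hi s ω = 0 ∨ Hi s ω = 1)
    (hHiP : ∀ s, μ {ω | Hi s ω = 1} = ENNReal.ofReal (pi s))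
    (hindep : iIndepFun (Sum.elim Hi Yt) μ)
    (Yi : Fin D → Ω → ℝ) (hYi : Yi = fun s ω => Hi s ω * Yt s ω)
    (G Gtilde : Ω → ℝ)
    (hG : G = fun ω => ∑ s, (Yi s ω) ^ 2)
    (hGt : Gtilde = fun ω => G ω / ∑ s, pi s)
    (pbar : ℝ) (hpbar : pbar = (∑ s, pi s) / D) :
    2 * Kii ^ 2 / (D * pbar) ≤ ∫ ω, Gtilde ω ^ 2 ∂μ - (∫ ω, Gtilde ω ∂μ) ^ 2 ∧
      ∫ ω, Gtilde ω ^ 2 ∂μ - (∫ ω, Gtilde ω ∂μ) ^ 2 ≤ Kii ^ 2 / D * (3 / pbar - 1) := by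
  have hD0 : (0:ℝ) < D := by exact_mod_cast Nat.lt_of_lt_of_le Nat.zero_lt_one hD
  set v : ℝ≥0 := Real.toNNReal Kii with hvdef
  have hvK : (v : ℝ) = Kii := Real.coe_toNNReal Kii hKii.le
  have hv : v ≠ 0 := by
    simp only [hvdef, ne_eq, Real.toNNReal_eq_zero, not_le]
    exact hKii
  set P : ℝ := ∑ s, pi s with hPdef
  have hP : 0 < P := Finset.sum_pos (fun s _ => (hpi s).1) ⟨⟨0, hD⟩, mem_univ _⟩
  set Z : Fin D → Ω → ℝ := fun s ω => (Hi s ω * Yt s ω) ^ 2 with hZdef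
  have hZmeas : ∀ s, Measurable (Z s) := fun s => ((hHi s).mul (hYt s)).pow_const 2
  have hHsq : ∀ s ω, Hi s ω ^ 2 = Hi s ω := by
    intro s ω; rcases hHi01 s ω with h | h <;> simp [h]
  have hHint : ∀ s, Integrable (Hi s) μ := by
    intro s
    refine (integrable_const (1:ℝ)).mono' (hHi s).aestronglyMeasurable (ae_of_all _ fun ω => ?_)
    rcases hHi01 s ω with h | h <;> simp [h]
  have hHmean : ∀ s, ∫ ω, Hi s ω ∂μ = pi s := by
    intro s
    have hA : MeasurableSet {ω | Hi s ω = 1} := (hHi s) (measurableSet_singleton 1)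
    have hind : Hi s = Set.indicator {ω | Hi s ω = 1} (fun _ => (1:ℝ)) := by
      funext ω
      rcases hHi01 s ω with h | h
      · have : ω ∉ {ω | Hi s ω = 1} := by simp [h]
        simp [Set.indicator_of_notMem this, h]
      · have : ω ∈ {ω | Hi s ω = 1} := h
        simp [Set.indicator_of_mem this, h]
    rw [hind, integral_indicator_const _ hA, measureReal_def, hHiP s, smul_eq_mul, mul_one,
      ENNReal.toReal_ofReal (hpi s).1.le]
  have hYt2 : ∀ s, ∫ ω, (Yt s ω) ^ 2 ∂μ = Kii := by
    intro s; rw [mapMoment μ (Yt s) (hYt s) v (hYtlaw s) 2, gMoment2 v hv, hvK]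
  have hYt4 : ∀ s, ∫ ω, (Yt s ω) ^ 4 ∂μ = 3 * Kii ^ 2 := by
    intro s; rw [mapMoment μ (Yt s) (hYt s) v (hYtlaw s) 4, gMoment4 v hv, hvK]
  have hYtInt : ∀ (k : ℕ) s, Integrable (fun ω => (Yt s ω) ^ k) μ :=
    fun k s => mapIntegrable μ (Yt s) (hYt s) v hv (hYtlaw s) k
  have hHYindep : ∀ s, IndepFun (Hi s) (Yt s) μ := by
    intro s
    have := hindep.indepFun (i := Sum.inl s) (j := Sum.inr s) (by simp)
    simpa using this
  have hZ1 : ∀ s, Z s = fun ω => Hi s ω * (Yt s ω) ^ 2 := by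
    intro s; funext ω; simp only [hZdef]; rw [mul_pow, hHsq s ω]
  have hZsq : ∀ s, (fun ω => Z s ω ^ 2) = fun ω => Hi s ω * (Yt s ω) ^ 4 := by
    intro s; funext ω; simp only [hZdef]
    rw [← pow_mul, mul_pow, show (2 * 2 : ℕ) = 4 by norm_num,
      show Hi s ω ^ 4 = (Hi s ω ^ 2) ^ 2 by ring, hHsq, hHsq]
  have hZint : ∀ s, Integrable (Z s) μ := by
    intro s
    rw [hZ1 s]
    exact ((hHYindep s).comp measurable_id (measurable_id.pow_const 2)).integrable_mul
      (hHint s) (hYtInt 2 s)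
  have hZsqint : ∀ s, Integrable (fun ω => Z s ω ^ 2) μ := by
    intro s
    rw [hZsq s]
    exact ((hHYindep s).comp measurable_id (measurable_id.pow_const 4)).integrable_mul
      (hHint s) (hYtInt 4 s)
  have hZmean : ∀ s, ∫ ω, Z s ω ∂μ = pi s * Kii := by
    intro s
    rw [hZ1 s]
    have h := ((hHYindep s).comp measurable_id (measurable_id.pow_const 2)).integral_mul_eq_mul_integral
      (hHi s).aestronglyMeasurable ((hYt s).pow_const 2).aestronglyMeasurable
    calc ∫ ω, Hi s ω * (Yt s ω) ^ 2 ∂μ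
        = (∫ ω, Hi s ω ∂μ) * ∫ ω, (Yt s ω) ^ 2 ∂μ := h
      _ = pi s * Kii := by rw [hHmean s, hYt2 s]
  have hZ2mean : ∀ s, ∫ ω, Z s ω ^ 2 ∂μ = pi s * (3 * Kii ^ 2) := by
    intro s
    have hzz := hZsq s
    have h := ((hHYindep s).comp measurable_id (measurable_id.pow_const 4)).integral_mul_eq_mul_integral
      (hHi s).aestronglyMeasurable ((hYt s).pow_const 4).aestronglyMeasurable
    calc ∫ ω, Z s ω ^ 2 ∂μ = ∫ ω, Hi s ω * (Yt s ω) ^ 4 ∂μ := by rw [← hzz]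
      _ = (∫ ω, Hi s ω ∂μ) * ∫ ω, (Yt s ω) ^ 4 ∂μ := h
      _ = pi s * (3 * Kii ^ 2) := by rw [hHmean s, hYt4 s]
  have hZmem : ∀ s, MemLp (Z s) 2 μ := fun s =>
    (memLp_two_iff_integrable_sq (hZmeas s).aestronglyMeasurable).mpr (hZsqint s)
  have hZvar : ∀ s, variance (Z s) μ = pi s * (3 * Kii ^ 2) - (pi s * Kii) ^ 2 := by
    intro s
    rw [variance_eq_sub (hZmem s)]
    have h1 : μ[(Z s) ^ 2] = ∫ ω, Z s ω ^ 2 ∂μ := rfl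
    have h2 : μ[Z s] = ∫ ω, Z s ω ∂μ := rfl
    rw [h1, h2, hZ2mean s, hZmean s]
  have hmeasSum : ∀ i, Measurable (Sum.elim Hi Yt i) := by
    rintro (i | i); exacts [hHi i, hYt i]
  have hZindep : Set.Pairwise ↑(univ : Finset (Fin D)) (fun s t => IndepFun (Z s) (Z t) μ) := by
    intro s _ t _ hst
    have h := hindep.indepFun_prodMk_prodMk hmeasSum (Sum.inl s) (Sum.inr s)
      (Sum.inl t) (Sum.inr t) (by simp [hst]) (by simp) (by simp) (by simp [hst])
    exact h.comp (φ := fun p : ℝ × ℝ => (p.1 * p.2) ^ 2) (ψ := fun p : ℝ × ℝ => (p.1 * p.2) ^ 2)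
      ((measurable_fst.mul measurable_snd).pow_const 2)
      ((measurable_fst.mul measurable_snd).pow_const 2)
  have hGsum : G = ∑ s, Z s := by
    funext ω
    rw [hG, Finset.sum_apply]
    exact Finset.sum_congr rfl (fun s _ => by rw [hYi])
  have hGvar : variance G μ = ∑ s, (pi s * (3 * Kii ^ 2) - (pi s * Kii) ^ 2) := by
    rw [hGsum, IndepFun.variance_sum (fun s _ => hZmem s) hZindep]
    exact Finset.sum_congr rfl fun s _ => hZvar s
  have hGmem : MemLp G 2 μ := by
    rw [hGsum]; exact memLp_finset_sum' _ (fun s _ => hZmem s)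
  have hGt' : Gtilde = P⁻¹ • G := by
    rw [hGt]; funext ω; simp [div_eq_inv_mul]
  have hGtmem : MemLp Gtilde 2 μ := by rw [hGt']; exact hGmem.const_smul _
  have hGtvar : variance Gtilde μ
      = P⁻¹ ^ 2 * ∑ s, (pi s * (3 * Kii ^ 2) - (pi s * Kii) ^ 2) := by
    rw [hGt', variance_smul, hGvar]
  have hmain : ∫ ω, Gtilde ω ^ 2 ∂μ - (∫ ω, Gtilde ω ∂μ) ^ 2 = variance Gtilde μ := by
    rw [variance_eq_sub hGtmem]; rfl
  rw [hmain, hGtvar]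
  set Q : ℝ := ∑ s, pi s ^ 2 with hQdef
  have hsum : ∑ s, (pi s * (3 * Kii ^ 2) - (pi s * Kii) ^ 2)
      = 3 * Kii ^ 2 * P - Kii ^ 2 * Q := by
    rw [Finset.sum_sub_distrib]
    simp only [mul_pow]
    rw [← Finset.sum_mul, ← Finset.sum_mul, hPdef, hQdef]
    ring
  rw [hsum]
  have hQP : Q ≤ P := Finset.sum_le_sum (fun s _ => by nlinarith [(hpi s).1, (hpi s).2])
  have hPQ : P ^ 2 ≤ D * Q := by
    have h := sq_sum_le_card_mul_sum_sq (s := (univ : Finset (Fin D))) (f := pi)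
    simpa [card_univ] using h
  have hDp : (D:ℝ) * pbar = P := by rw [hpbar]; field_simp
  have hPinv : P⁻¹ ^ 2 * (3 * Kii ^ 2 * P - Kii ^ 2 * Q)
      = (3 * Kii ^ 2 * P - Kii ^ 2 * Q) / P ^ 2 := by
    field_simp
  constructor
  · rw [hDp, hPinv, div_le_div_iff₀ hP (by positivity)]
    nlinarith [mul_le_mul_of_nonneg_left hQP (le_of_lt (mul_pos (pow_pos hKii 2) hP))]
  · have hrhs : Kii ^ 2 / D * (3 / pbar - 1) = (3 * Kii ^ 2 * D - Kii ^ 2 * P) / (P * D) := by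
      rw [hpbar]
      field_simp
    rw [hrhs, hPinv, div_le_div_iff₀ (by positivity) (by positivity)]
    nlinarith [mul_le_mul_of_nonneg_left hPQ (le_of_lt (mul_pos (pow_pos hKii 2) hP))]
end
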